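/- Let ρ ∈ (0,1), γ > 0, T > 0 and 0 < λ₁ ≤ λ. Then for every t ∈ [0,T] one has A_ρ(λ,t) ≥ C(ρ,γ,λ₁) > 0, where C(ρ,γ,λ₁) = (γ sin(ρπ)/(3π)) ∫₀^∞ r^{ρ−1} e^{−rT} / (r²/λ₁² + γ² r^{2ρ} + 1) dr. -/

import Mathlib

open MeasureTheory Real Set

/-- The function `A_ρ(λ,t)` from the Rayleigh–Stokes problem. -/
noncomputable def Arho (ρ γ lam t : ℝ) : ℝ :=
  (γ / π) * ∫ r in Ioi (0 : ℝ),
    Real.exp (-r * t) * (lam ^ 2 * r ^ (ρ - 1) * Real.sin (ρ * π)) /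
      ((lam - r + lam * γ * r ^ ρ * Real.cos (ρ * π)) ^ 2 +
        (lam * γ * r ^ ρ * Real.sin (ρ * π)) ^ 2)

/-!
With `p = λ γ r^ρ`, the denominator of the integrand of `A_ρ(λ, t)` is `|λ - r + p e^{iρπ}|²`.
By Cauchy–Schwarz it is at most `3 (λ² + r² + p²) ≤ 3 λ² (r²/λ₁² + γ² r^{2ρ} + 1)`, and
`e^{-rt} ≥ e^{-rT}`; integrating this pointwise comparison gives the bound. The integrand of `A_ρ`
is integrable because its denominator is at least `(1 - |cos ρπ|) (λ - r)²` near `0` and at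
least `(p sin ρπ)²` near `∞`, making the integrand `O(r^{ρ-1})` and `O(r^{-ρ-1})` there.
-/

theorem setIntegral_pos_of_forall_pos {X : Type*} [MeasurableSpace X] {μ : Measure X}
    {s : Set X} {f : X → ℝ} (hs : MeasurableSet s) (hμs : μ s ≠ 0) (hf : IntegrableOn f s μ)
    (hpos : ∀ x ∈ s, 0 < f x) : 0 < ∫ x in s, f x ∂μ := by
  have hsupp : Function.support f ∩ s = s :=
    inter_eq_self_of_subset_right fun x hx => (hpos x hx).ne'
  rw [setIntegral_pos_iff_support_of_nonneg_ae _ hf]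
  · rwa [hsupp, pos_iff_ne_zero]
  · exact (ae_restrict_iff' hs).2 (ae_of_all _ fun x hx => (hpos x hx).le)

theorem integrableOn_Ioi_of_norm_le_rpow {f : ℝ → ℝ} {a ρ C₀ C₁ : ℝ} (ha : 0 < a) (hρ : 0 < ρ)
    (hf : AEStronglyMeasurable f (volume.restrict (Ioi 0)))
    (h_zero : ∀ r ∈ Ioc 0 a, ‖f r‖ ≤ C₀ * r ^ (ρ - 1))
    (h_top : ∀ r ∈ Ioi a, ‖f r‖ ≤ C₁ * r ^ (-ρ - 1)) :
    IntegrableOn f (Ioi 0) := by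
  have h_int_zero : IntegrableOn (fun r : ℝ => r ^ (ρ - 1)) (Ioc 0 a) :=
    (intervalIntegral.intervalIntegrable_rpow' (by linarith)).1
  have h_int_top : IntegrableOn (fun r : ℝ => r ^ (-ρ - 1)) (Ioi a) :=
    integrableOn_Ioi_rpow_of_lt (by linarith) ha
  rw [← Ioc_union_Ioi_eq_Ioi ha.le]
  refine IntegrableOn.union ?_ ?_
  · refine (h_int_zero.const_mul C₀).mono' (hf.mono_set Ioc_subset_Ioi_self) ?_
    filter_upwards [ae_restrict_mem measurableSet_Ioc] with r hr using h_zero r hr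
  · refine (h_int_top.const_mul C₁).mono' (hf.mono_set (Ioi_subset_Ioi ha.le)) ?_
    filter_upwards [ae_restrict_mem measurableSet_Ioi] with r hr using h_top r hr

theorem integrableOn_rpow_mul_exp_neg_mul {ρ T : ℝ} (hρ : 0 < ρ) (hT : 0 < T) :
    IntegrableOn (fun r : ℝ => r ^ (ρ - 1) * exp (-r * T)) (Ioi 0) := by
  refine (integrableOn_rpow_mul_exp_neg_mul_rpow (s := ρ - 1) (by linarith) one_pos hT).congr_fun
    (fun r hr => ?_) measurableSet_Ioi
  simp only [rpow_one, neg_mul, mul_comm T]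

theorem sin_mul_pi_pos {ρ : ℝ} (hρ : ρ ∈ Ioo 0 1) : 0 < sin (ρ * π) :=
  sin_pos_of_pos_of_lt_pi (mul_pos hρ.1 pi_pos) (mul_lt_of_lt_one_left pi_pos hρ.2)

theorem abs_cos_mul_pi_lt_one {ρ : ℝ} (hρ : ρ ∈ Ioo 0 1) : |cos (ρ * π)| < 1 := by
  have := sin_mul_pi_pos hρ
  rw [← sq_lt_one_iff_abs_lt_one]
  nlinarith [sin_sq_add_cos_sq (ρ * π)]

theorem one_sub_abs_mul_sq_add_sq_le {x p c s : ℝ} (hcs : s ^ 2 + c ^ 2 = 1) :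
    (1 - |c|) * (x ^ 2 + p ^ 2) ≤ (x + p * c) ^ 2 + (p * s) ^ 2 := by
  nlinarith [mul_nonneg (by linarith [neg_abs_le c] : (0:ℝ) ≤ |c| + c) (sq_nonneg (x + p)),
    mul_nonneg (by linarith [le_abs_self c] : (0:ℝ) ≤ |c| - c) (sq_nonneg (x - p))]

theorem sub_add_mul_sq_add_sq_le {x y p c s : ℝ} (hcs : s ^ 2 + c ^ 2 = 1) :
    (x - y + p * c) ^ 2 + (p * s) ^ 2 ≤ 3 * (x ^ 2 + y ^ 2 + p ^ 2) := by
  nlinarith [sq_nonneg (x + y), sq_nonneg (x - p * c), sq_nonneg (y + p * c), sq_nonneg (p * s)]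

namespace Arho

noncomputable def denom (ρ γ lam r : ℝ) : ℝ :=
  (lam - r + lam * γ * r ^ ρ * cos (ρ * π)) ^ 2 + (lam * γ * r ^ ρ * sin (ρ * π)) ^ 2

noncomputable def integrand (ρ γ lam t r : ℝ) : ℝ :=
  exp (-r * t) * (lam ^ 2 * r ^ (ρ - 1) * sin (ρ * π)) / denom ρ γ lam r

theorem eq_integral (ρ γ lam t : ℝ) :
    Arho ρ γ lam t = γ / π * ∫ r in Ioi 0, integrand ρ γ lam t r :=
  rfl

noncomputable def lowerConstIntegrand (ρ γ T lam₁ r : ℝ) : ℝ :=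
  r ^ (ρ - 1) * exp (-r * T) / (r ^ 2 / lam₁ ^ 2 + γ ^ 2 * r ^ (2 * ρ) + 1)

/-- The constant `C(ρ, γ, λ₁)` of the lower bound. -/
noncomputable def lowerConst (ρ γ T lam₁ : ℝ) : ℝ :=
  γ * sin (ρ * π) / (3 * π) * ∫ r in Ioi 0, lowerConstIntegrand ρ γ T lam₁ r

variable {ρ γ T lam₁ lam t r : ℝ}

theorem denom_le (hlam₁ : 0 < lam₁) (hlam : lam₁ ≤ lam) (hr : 0 ≤ r) :
    denom ρ γ lam r ≤ 3 * lam ^ 2 * (r ^ 2 / lam₁ ^ 2 + γ ^ 2 * r ^ (2 * ρ) + 1) := by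
  have hr2 : r ^ 2 ≤ lam ^ 2 * (r ^ 2 / lam₁ ^ 2) := by
    rw [mul_div_assoc', le_div_iff₀ (by positivity)]
    have : lam₁ ^ 2 ≤ lam ^ 2 := pow_le_pow_left₀ hlam₁.le hlam 2
    nlinarith [sq_nonneg r]
  have hp : (lam * γ * r ^ ρ) ^ 2 = lam ^ 2 * (γ ^ 2 * r ^ (2 * ρ)) := by
    rw [mul_comm 2 ρ, rpow_mul hr, rpow_two]; ring
  calc denom ρ γ lam r ≤ 3 * (lam ^ 2 + r ^ 2 + (lam * γ * r ^ ρ) ^ 2) :=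
        sub_add_mul_sq_add_sq_le (sin_sq_add_cos_sq _)
    _ ≤ 3 * lam ^ 2 * (r ^ 2 / lam₁ ^ 2 + γ ^ 2 * r ^ (2 * ρ) + 1) := by
        rw [hp]; nlinarith

theorem one_sub_abs_cos_mul_le_denom :
    (1 - |cos (ρ * π)|) * (lam - r) ^ 2 ≤ denom ρ γ lam r :=
  le_trans (mul_le_mul_of_nonneg_left (le_add_of_nonneg_right (sq_nonneg _))
    (by linarith [abs_cos_le_one (ρ * π)])) (one_sub_abs_mul_sq_add_sq_le (sin_sq_add_cos_sq _))

theorem integrand_nonneg (hρ : ρ ∈ Ioo 0 1) (hr : 0 < r) : 0 ≤ integrand ρ γ lam t r := by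
  have := sin_mul_pi_pos hρ
  unfold integrand denom
  positivity

theorem integrand_le_of_le_denom (hρ : ρ ∈ Ioo 0 1) (ht : 0 ≤ t) (hr : 0 < r) {d : ℝ}
    (hd : 0 < d) (hd_le : d ≤ denom ρ γ lam r) :
    integrand ρ γ lam t r ≤ lam ^ 2 * r ^ (ρ - 1) * sin (ρ * π) / d := by
  have := sin_mul_pi_pos hρ
  refine div_le_div₀ (by positivity) ?_ hd hd_le
  exact mul_le_of_le_one_left (by positivity) (exp_le_one_iff.2 (by nlinarith))

theorem integrableOn_integrand (hρ : ρ ∈ Ioo 0 1) (hγ : 0 < γ) (hlam : 0 < lam) (ht : 0 ≤ t) :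
    IntegrableOn (integrand ρ γ lam t) (Ioi 0) := by
  have hs := sin_mul_pi_pos hρ
  have hc : 0 < 1 - |cos (ρ * π)| := sub_pos.2 (abs_cos_mul_pi_lt_one hρ)
  have hmeas : Measurable (integrand ρ γ lam t) := by
    unfold integrand denom; fun_prop
  refine integrableOn_Ioi_of_norm_le_rpow (half_pos hlam) hρ.1 hmeas.aestronglyMeasurable
    (C₀ := 4 * sin (ρ * π) / (1 - |cos (ρ * π)|)) (C₁ := 1 / (γ ^ 2 * sin (ρ * π)))
    (fun r hr => ?_) (fun r hr => ?_)
  · rw [norm_of_nonneg (integrand_nonneg hρ hr.1)]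
    have hd : (1 - |cos (ρ * π)|) * (lam / 2) ^ 2 ≤ denom ρ γ lam r :=
      le_trans (mul_le_mul_of_nonneg_left (pow_le_pow_left₀ (by linarith) (by linarith [hr.2]) 2)
        hc.le) one_sub_abs_cos_mul_le_denom
    refine (integrand_le_of_le_denom hρ ht hr.1 (by positivity) hd).trans_eq ?_
    field_simp
    ring
  · have hr0 : 0 < r := (half_pos hlam).trans hr
    rw [norm_of_nonneg (integrand_nonneg hρ hr0)]
    have hd : (lam * γ * r ^ ρ * sin (ρ * π)) ^ 2 ≤ denom ρ γ lam r :=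
      le_add_of_nonneg_left (sq_nonneg _)
    refine (integrand_le_of_le_denom hρ ht hr0 (by positivity) hd).trans_eq ?_
    have hpow : r ^ (-ρ - 1) = r ^ (ρ - 1) / (r ^ ρ) ^ 2 := by
      rw [← rpow_natCast, ← rpow_mul hr0.le, ← rpow_sub hr0]
      ring_nf
    rw [hpow]
    field_simp

theorem integrableOn_lowerConstIntegrand (hρ : 0 < ρ) (hT : 0 < T) :
    IntegrableOn (lowerConstIntegrand ρ γ T lam₁) (Ioi 0) := by
  have hmeas : Measurable (lowerConstIntegrand ρ γ T lam₁) := by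
    unfold lowerConstIntegrand; fun_prop
  refine (integrableOn_rpow_mul_exp_neg_mul hρ hT).mono' hmeas.aestronglyMeasurable ?_
  filter_upwards [ae_restrict_mem measurableSet_Ioi] with r (hr : 0 < r)
  rw [norm_of_nonneg (by unfold lowerConstIntegrand; positivity)]
  have h₁ : 0 ≤ r ^ 2 / lam₁ ^ 2 := by positivity
  have h₂ : 0 ≤ γ ^ 2 * r ^ (2 * ρ) := by positivity
  exact div_le_self (by positivity) (by linarith)

theorem lowerConst_pos (hρ : ρ ∈ Ioo 0 1) (hγ : 0 < γ) (hT : 0 < T) :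
    0 < lowerConst ρ γ T lam₁ := by
  have hs := sin_mul_pi_pos hρ
  refine mul_pos (by positivity) (setIntegral_pos_of_forall_pos measurableSet_Ioi (by simp)
    (integrableOn_lowerConstIntegrand hρ.1 hT) fun r (hr : 0 < r) => ?_)
  unfold lowerConstIntegrand
  positivity

theorem sin_div_three_mul_lowerConstIntegrand_le_integrand (hρ : ρ ∈ Ioo 0 1) (hγ : 0 < γ)
    (hlam₁ : 0 < lam₁) (hlam : lam₁ ≤ lam) (ht : t ≤ T) (hr : 0 < r) :
    sin (ρ * π) / 3 * lowerConstIntegrand ρ γ T lam₁ r ≤ integrand ρ γ lam t r := by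
  have hs := sin_mul_pi_pos hρ
  have hlam0 : 0 < lam := hlam₁.trans_le hlam
  have hdenom : 0 < denom ρ γ lam r :=
    lt_add_of_le_of_pos (sq_nonneg _) (by positivity)
  calc sin (ρ * π) / 3 * lowerConstIntegrand ρ γ T lam₁ r
      = exp (-r * T) * (lam ^ 2 * r ^ (ρ - 1) * sin (ρ * π)) /
          (3 * lam ^ 2 * (r ^ 2 / lam₁ ^ 2 + γ ^ 2 * r ^ (2 * ρ) + 1)) := by
        unfold lowerConstIntegrand
        field_simp
    _ ≤ integrand ρ γ lam t r :=
        div_le_div₀ (by positivity)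
          (mul_le_mul_of_nonneg_right (exp_le_exp.2 (by nlinarith)) (by positivity))
          hdenom (denom_le hlam₁ hlam hr.le)

theorem lowerConst_le (hρ : ρ ∈ Ioo 0 1) (hγ : 0 < γ) (hT : 0 < T) (hlam₁ : 0 < lam₁)
    (hlam : lam₁ ≤ lam) (ht : t ∈ Icc 0 T) :
    lowerConst ρ γ T lam₁ ≤ Arho ρ γ lam t := by
  have hs := sin_mul_pi_pos hρ
  have hmono : ∫ r in Ioi 0, sin (ρ * π) / 3 * lowerConstIntegrand ρ γ T lam₁ r ≤
      ∫ r in Ioi 0, integrand ρ γ lam t r :=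
    setIntegral_mono_on ((integrableOn_lowerConstIntegrand hρ.1 hT).const_mul _)
      (integrableOn_integrand hρ hγ (hlam₁.trans_le hlam) ht.1) measurableSet_Ioi
      fun r hr => sin_div_three_mul_lowerConstIntegrand_le_integrand hρ hγ hlam₁ hlam ht.2 hr
  rw [integral_const_mul] at hmono
  calc lowerConst ρ γ T lam₁
      = γ / π * (sin (ρ * π) / 3 * ∫ r in Ioi 0, lowerConstIntegrand ρ γ T lam₁ r) := by
        unfold lowerConst; ring
    _ ≤ Arho ρ γ lam t := by
        rw [eq_integral]; gcongr

end Arho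

/-- Lower bound `A_ρ(λ,t) ≥ C(ρ,γ,λ₁) > 0` on `[0,T]`. -/
theorem Arho_lower_bound (ρ γ T lam₁ lam : ℝ) (hρ : ρ ∈ Ioo (0 : ℝ) 1)
    (hγ : 0 < γ) (hT : 0 < T) (hlam₁ : 0 < lam₁) (hlam : lam₁ ≤ lam) :
    0 < (γ * Real.sin (ρ * π) / (3 * π)) *
        ∫ r in Ioi (0 : ℝ),
          r ^ (ρ - 1) * Real.exp (-r * T) / (r ^ 2 / lam₁ ^ 2 + γ ^ 2 * r ^ (2 * ρ) + 1) ∧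
    ∀ t ∈ Icc (0 : ℝ) T,
      Arho ρ γ lam t ≥
        (γ * Real.sin (ρ * π) / (3 * π)) *
          ∫ r in Ioi (0 : ℝ),
            r ^ (ρ - 1) * Real.exp (-r * T) / (r ^ 2 / lam₁ ^ 2 + γ ^ 2 * r ^ (2 * ρ) + 1) :=
  ⟨Arho.lowerConst_pos hρ hγ hT, fun _ ht => Arho.lowerConst_le hρ hγ hT hlam₁ hlam ht⟩
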